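/- Let φ_k be the endomorphism of F(a,b) given by a ↦ a^{ε₀} b^k, b ↦ b^{ε₁}, and let W be a freely reduced word. Then: (1) if W begins with a, the reduced form of Wφ_k begins with a^{ε₀}; (2) if W begins with a^{-1}, the reduced form of Wφ_k begins with b^{-k} a^{-ε₀}; (3) if W ends with a^{-1}, it ends with a^{-ε₀}; (4) if W ends with a, it ends with a^{ε₀} b^{k}. -/

import Mathlib

/-!
Write `φ_k(a^{±1}) = b^β a^{±ε₀} b^α`, with `(β, α) = (0, k)` for `a` and `(-k, 0)` for `a⁻¹`.
Between two consecutive `a`-letters of a reduced word `W` stands a power `b^m`, which becomes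
`b^(α + ε₁ m + β')` in the image. If the two letters are inverse to each other, then `α + β' = 0`
and `m ≠ 0`, so this power is nontrivial; otherwise the two image letters have the same sign.
Either way the `a`-letters of the image never cancel, so the first letter `a^{±1}` of `W`
survives as `a^{±ε₀}` preceded by exactly `b^β`. The claims about the end of `Wφ_k` follow by
applying this to `W⁻¹`.
-/

def innAut (G : Type*) [Group G] : Subgroup (MulAut G) := (MulAut.conj : G →* MulAut G).range

instance innAut_normal (G : Type*) [Group G] : (innAut G).Normal := by
  constructor
  rintro x ⟨g, rfl⟩ f
  refine ⟨f g, ?_⟩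
  ext h
  simp [MulAut.conj_apply, MulAut.mul_apply, mul_assoc]

abbrev Out (G : Type*) [Group G] := MulAut G ⧸ innAut G

def ResiduallyFinite (G : Type*) [Group G] : Prop :=
  ∀ g : G, g ≠ 1 → ∃ N : Subgroup G, N.Normal ∧ Finite (G ⧸ N) ∧ g ∉ N

noncomputable def expSum (i : Fin 2) : FreeGroup (Fin 2) →* Multiplicative ℤ :=
  FreeGroup.lift (fun j => Multiplicative.ofAdd (if j = i then (1 : ℤ) else 0))

noncomputable def σ (i : Fin 2) (w : FreeGroup (Fin 2)) : ℤ :=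
  Multiplicative.toAdd (expSum i w)

def NielsenEquiv {G : Type*} [Group G] {n : ℕ} (Y Z : Fin n → G) : Prop :=
  ∃ φ : FreeGroup (Fin n) ≃* FreeGroup (Fin n),
    ∀ i, FreeGroup.lift Y (φ (FreeGroup.of i)) = Z i

def SameTSystem {G : Type*} [Group G] {n : ℕ} (Y Z : Fin n → G) : Prop :=
  ∃ ψ : G ≃* G, NielsenEquiv (fun i => ψ (Y i)) Z

/-- φ_k : a ↦ a^{ε₀}bᵏ, b ↦ b^{ε₁}. -/
noncomputable def φk (ε₀ ε₁ k : ℤ) : FreeGroup (Fin 2) →* FreeGroup (Fin 2) :=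
  FreeGroup.lift (fun t => if t = 0
    then (FreeGroup.of (0 : Fin 2)) ^ ε₀ * (FreeGroup.of (1 : Fin 2)) ^ k
    else (FreeGroup.of (1 : Fin 2)) ^ ε₁)

open List

namespace FreeGroup

variable {α : Type*}

theorem invRev_prefix_invRev {L₁ L₂ : List (α × Bool)} :
    invRev L₁ <+: invRev L₂ ↔ L₁ <:+ L₂ := by
  rw [invRev, invRev, reverse_prefix]
  exact suffix_map_iff_of_injective fun u v huv => by simpa [Prod.ext_iff] using huv

variable [DecidableEq α]

theorem toWord_inv_prefix_toWord_inv {x y : FreeGroup α} :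
    x⁻¹.toWord <+: y⁻¹.toWord ↔ x.toWord <:+ y.toWord := by
  rw [toWord_inv, toWord_inv, invRev_prefix_invRev]

theorem toWord_mk_of_isReduced {L : List (α × Bool)} (hL : IsReduced L) : (mk L).toWord = L := by
  rw [toWord_mk, hL.reduce_eq]

theorem eq_mul_of_toWord_eq_append {g x y : FreeGroup α} (h : g.toWord = x.toWord ++ y.toWord) :
    g = x * y := by
  rw [← mk_toWord (x := g), h, ← mul_mk, mk_toWord, mk_toWord]

theorem toWord_mul_eq_append {x y : FreeGroup α}
    (h : ∀ u ∈ x.toWord.getLast?, ∀ v ∈ y.toWord.head?, u.1 = v.1 → u.2 = v.2) :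
    (x * y).toWord = x.toWord ++ y.toWord := by
  rw [toWord_mul]
  exact IsReduced.reduce_eq (isChain_append.2 ⟨isReduced_toWord, isReduced_toWord, h⟩)

theorem toWord_of_zpow (a : α) (m : ℤ) :
    (of a ^ m).toWord = replicate m.natAbs (a, decide (0 < m)) := by
  obtain ⟨n, rfl | rfl⟩ := m.eq_nat_or_neg
  · rcases n.eq_zero_or_pos with rfl | hn
    · simp
    · simp [toWord_of_pow, hn]
  · simp [toWord_inv, toWord_of_pow, invRev]

theorem head?_toWord_of_zpow {a : α} {m : ℤ} (hm : m ≠ 0) :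
    (of a ^ m).toWord.head? = some (a, decide (0 < m)) := by
  simp [toWord_of_zpow, head?_replicate, hm]

theorem toWord_of_zpow_mul {a : α} {m : ℤ} {g : FreeGroup α}
    (hg : g.toWord.head? ≠ some (a, !decide (0 < m))) :
    (of a ^ m * g).toWord = (of a ^ m).toWord ++ g.toWord := by
  refine toWord_mul_eq_append fun u hu v hv huv => ?_
  rw [toWord_of_zpow, getLast?_replicate] at hu
  obtain ⟨-, rfl⟩ : m.natAbs ≠ 0 ∧ (a, decide (0 < m)) = u := by simpa using hu
  by_contra hne
  refine hg (hv ▸ congrArg some (Prod.ext huv.symm ?_))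
  simpa [eq_comm, Bool.eq_not] using hne

theorem IsReduced.exists_eq_replicate_append (a : α) {L : List (α × Bool)} (hL : IsReduced L) :
    ∃ n s L', L = replicate n (a, s) ++ L' ∧ ∀ v ∈ L'.head?, v.1 ≠ a := by
  induction L with
  | nil => exact ⟨0, true, [], rfl, by simp⟩
  | cons u L ih =>
    by_cases hu : u.1 = a
    · obtain ⟨n, s, L', rfl, hL'⟩ := ih hL.tail
      cases n with
      | zero => exact ⟨1, u.2, L', by simp [← hu], hL'⟩
      | succ n =>
        have hs : u.2 = s := by
          simp only [replicate_succ, cons_append, isReduced_cons_cons] at hL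
          exact hL.1 hu
        exact ⟨n + 2, s, L', by simp [replicate_succ, ← hu, ← hs], hL'⟩
    · exact ⟨0, true, u :: L, rfl, by simpa using hu⟩

theorem exists_toWord_eq_toWord_zpow_append (a : α) (g : FreeGroup α) :
    ∃ (m : ℤ) (g' : FreeGroup α), g.toWord = (of a ^ m).toWord ++ g'.toWord ∧
      ∀ v ∈ g'.toWord.head?, v.1 ≠ a := by
  obtain ⟨n, s, L', hg, hL'⟩ := isReduced_toWord.exists_eq_replicate_append a (L := g.toWord)
  have hred : IsReduced L' := isReduced_toWord.infix (by rw [hg]; exact (suffix_append _ _).isInfix)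
  refine ⟨if s then n else -n, mk L', ?_, by rwa [toWord_mk_of_isReduced hred]⟩
  rw [toWord_mk_of_isReduced hred, hg, toWord_of_zpow]
  congr 1
  rcases n.eq_zero_or_pos with rfl | hn
  · simp
  · cases s <;> simp [hn]

end FreeGroup

open FreeGroup hiding map_mul map_one map_inv

section Image

variable (ε₀ ε₁ k : ℤ)

def aExp (s : Bool) : ℤ := if s then ε₀ else -ε₀

def preExp (s : Bool) : ℤ := if s then 0 else -k

def postExp (s : Bool) : ℤ := if s then k else 0

theorem aExp_ne_zero (hε₀ : ε₀ ≠ 0) (s : Bool) : aExp ε₀ s ≠ 0 := by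
  cases s <;> simpa [aExp]

theorem postExp_add_preExp_not (s : Bool) : postExp k s + preExp k (!s) = 0 := by
  cases s <;> simp [postExp, preExp]

theorem φk_mk_singleton (s : Bool) :
    φk ε₀ ε₁ k (mk [(0, s)]) = of 1 ^ preExp k s * of 0 ^ aExp ε₀ s * of 1 ^ postExp k s := by
  cases s
  · rw [show mk [((0 : Fin 2), false)] = (of 0)⁻¹ from rfl]
    simp [φk, preExp, aExp, postExp, mul_inv_rev, zpow_neg]
  · simp [φk, preExp, aExp, postExp, of]

theorem φk_of_one_zpow (m : ℤ) : φk ε₀ ε₁ k (of 1 ^ m) = of 1 ^ (ε₁ * m) := by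
  simp [φk, ← zpow_mul]

def FirstLetterSurvives (W : FreeGroup (Fin 2)) : Prop :=
  ∀ s, W.toWord.head? = some (0, s) →
    ∃ h, φk ε₀ ε₁ k W = of 1 ^ preExp k s * h ∧ (of 0 ^ aExp ε₀ s).toWord <+: h.toWord

variable {ε₀ ε₁ k}

/-- Write `V = b^m V'` with `V'` not starting with `b^{±1}`. If `V'` starts with `a^{∓1}`, the
offsets `postExp s` and `preExp (!s)` cancel, leaving `b^(ε₁ m)` in front, and `m ≠ 0` because
`V` itself does not start with `a^{∓1}`. -/
theorem head?_toWord_postExp_mul_φk_ne (hε₀ : ε₀ ≠ 0) (hε₁ : ε₁ ≠ 0) {V : FreeGroup (Fin 2)}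
    (ih : ∀ V' : FreeGroup (Fin 2), V'.toWord.length ≤ V.toWord.length →
      FirstLetterSurvives ε₀ ε₁ k V')
    {s : Bool} (hs : V.toWord.head? ≠ some (0, !s)) :
    (of 1 ^ postExp k s * φk ε₀ ε₁ k V).toWord.head? ≠ some (0, !decide (0 < aExp ε₀ s)) := by
  obtain ⟨m, V', hVw, hV'⟩ := exists_toWord_eq_toWord_zpow_append 1 V
  have hlen : V'.toWord.length ≤ V.toWord.length := by simp [hVw]
  rw [eq_mul_of_toWord_eq_append hVw, map_mul, φk_of_one_zpow, ← mul_assoc, ← zpow_add]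
  rcases hV'h : V'.toWord.head? with _ | ⟨i, s'⟩
  · rw [toWord_eq_nil_iff.1 (head?_eq_none_iff.1 hV'h), map_one, mul_one, toWord_of_zpow]
    simp [head?_replicate]
  obtain rfl : i = 0 := by
    have := hV' _ hV'h
    fin_cases i <;> simp_all
  obtain ⟨h, hφ, t, ht⟩ := ih V' hlen s' hV'h
  have hh : h.toWord.head? = some (0, decide (0 < aExp ε₀ s')) := by
    rw [← ht, head?_append, head?_toWord_of_zpow (aExp_ne_zero ε₀ hε₀ s'), Option.some_or]
  rw [hφ, ← mul_assoc, ← zpow_add, toWord_of_zpow_mul (by simp [hh])]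
  rcases eq_or_ne (postExp k s + ε₁ * m + preExp k s') 0 with hN | hN
  · rw [hN, zpow_zero, toWord_one, nil_append, hh]
    obtain rfl | rfl : s' = s ∨ s' = !s := by cases s <;> cases s' <;> simp
    · simp
    have hm : m = 0 := by
      have : ε₁ * m = 0 := by linarith [postExp_add_preExp_not k s]
      simpa [hε₁] using this
    rw [hm, zpow_zero, toWord_one, nil_append] at hVw
    exact absurd (hVw ▸ hV'h) hs
  · rw [head?_append, head?_toWord_of_zpow hN]
    simp

theorem firstLetterSurvives (hε₀ : ε₀ ≠ 0) (hε₁ : ε₁ ≠ 0) (W : FreeGroup (Fin 2)) :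
    FirstLetterSurvives ε₀ ε₁ k W := by
  induction hn : W.toWord.length using Nat.strong_induction_on generalizing W with
  | _ n ih =>
    intro s hs
    obtain ⟨L, hWL⟩ := head?_eq_some_iff.1 hs
    have hred : IsReduced ((0, s) :: L) := hWL ▸ isReduced_toWord
    have hV : (mk L).toWord = L := toWord_mk_of_isReduced hred.tail
    have hW : W = mk [(0, s)] * mk L := eq_mul_of_toWord_eq_append (by rw [hWL, hV]; rfl)
    have hVs : (mk L).toWord.head? ≠ some (0, !s) := by
      rw [hV]
      rintro hL
      obtain ⟨L', rfl⟩ := head?_eq_some_iff.1 hL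
      simp at hred
    have ih' : ∀ V' : FreeGroup (Fin 2), V'.toWord.length ≤ (mk L).toWord.length →
        FirstLetterSurvives ε₀ ε₁ k V' := fun V' hV' =>
      ih _ (by rw [hV] at hV'; rw [← hn, hWL, length_cons]; omega) V' rfl
    refine ⟨of 0 ^ aExp ε₀ s * (of 1 ^ postExp k s * φk ε₀ ε₁ k (mk L)), ?_, ?_⟩
    · rw [hW, map_mul, φk_mk_singleton]
      simp only [mul_assoc]
    · rw [toWord_of_zpow_mul (head?_toWord_postExp_mul_φk_ne hε₀ hε₁ ih' hVs)]
      exact prefix_append _ _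

theorem toWord_zpow_prefix_toWord_φk (hε₀ : ε₀ ≠ 0) (hε₁ : ε₁ ≠ 0) {W : FreeGroup (Fin 2)}
    (hW : [((0 : Fin 2), true)] <+: W.toWord) :
    (of (0 : Fin 2) ^ ε₀).toWord <+: (φk ε₀ ε₁ k W).toWord := by
  obtain ⟨t, ht⟩ := hW
  obtain ⟨h, hφ, hpre⟩ := firstLetterSurvives hε₀ hε₁ W true (by rw [← ht]; rfl)
  rw [hφ]
  simpa [preExp, aExp] using hpre

theorem toWord_zpow_mul_zpow_prefix_toWord_φk (hε₀ : ε₀ ≠ 0) (hε₁ : ε₁ ≠ 0)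
    {W : FreeGroup (Fin 2)} (hW : [((0 : Fin 2), false)] <+: W.toWord) :
    (of (1 : Fin 2) ^ (-k) * of (0 : Fin 2) ^ (-ε₀)).toWord <+: (φk ε₀ ε₁ k W).toWord := by
  obtain ⟨t, ht⟩ := hW
  obtain ⟨h, hφ, t', ht'⟩ : ∃ h, φk ε₀ ε₁ k W = of 1 ^ (-k) * h ∧
      (of 0 ^ (-ε₀)).toWord <+: h.toWord :=
    firstLetterSurvives hε₀ hε₁ W false (by rw [← ht]; rfl)
  have hA := head?_toWord_of_zpow (a := (0 : Fin 2)) (neg_ne_zero.2 hε₀)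
  have hh : h.toWord.head? = some (0, decide (0 < -ε₀)) := by
    rw [← ht', head?_append, hA, Option.some_or]
  rw [hφ, toWord_of_zpow_mul (by rw [hA]; simp), toWord_of_zpow_mul (by rw [hh]; simp), ← ht',
    ← append_assoc]
  exact prefix_append _ _

end Image

theorem statement_13 (ε₀ ε₁ : ℤ) (h0 : ε₀ = 1 ∨ ε₀ = -1) (h1 : ε₁ = 1 ∨ ε₁ = -1)
    (k : ℤ) (W : FreeGroup (Fin 2)) :
    (([((0 : Fin 2), true)] <+: W.toWord) →
      ((FreeGroup.of (0 : Fin 2) ^ ε₀).toWord <+: (φk ε₀ ε₁ k W).toWord)) ∧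
    (([((0 : Fin 2), false)] <+: W.toWord) →
      ((FreeGroup.of (1 : Fin 2) ^ (-k) * FreeGroup.of (0 : Fin 2) ^ (-ε₀)).toWord <+:
        (φk ε₀ ε₁ k W).toWord)) ∧
    (([((0 : Fin 2), false)] <:+ W.toWord) →
      ((FreeGroup.of (0 : Fin 2) ^ (-ε₀)).toWord <:+ (φk ε₀ ε₁ k W).toWord)) ∧
    (([((0 : Fin 2), true)] <:+ W.toWord) →
      ((FreeGroup.of (0 : Fin 2) ^ ε₀ * FreeGroup.of (1 : Fin 2) ^ k).toWord <:+
        (φk ε₀ ε₁ k W).toWord)) := by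
  have hε₀ : ε₀ ≠ 0 := by rcases h0 with rfl | rfl <;> decide
  have hε₁ : ε₁ ≠ 0 := by rcases h1 with rfl | rfl <;> decide
  refine ⟨toWord_zpow_prefix_toWord_φk hε₀ hε₁, toWord_zpow_mul_zpow_prefix_toWord_φk hε₀ hε₁,
    fun hW => ?_, fun hW => ?_⟩
  · rw [← toWord_inv_prefix_toWord_inv, ← map_inv, zpow_neg, inv_inv]
    exact toWord_zpow_prefix_toWord_φk hε₀ hε₁ (by rw [toWord_inv]; exact invRev_prefix_invRev.2 hW)
  · rw [← toWord_inv_prefix_toWord_inv, ← map_inv, mul_inv_rev, ← zpow_neg, ← zpow_neg]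
    exact toWord_zpow_mul_zpow_prefix_toWord_φk hε₀ hε₁
      (by rw [toWord_inv]; exact invRev_prefix_invRev.2 hW)
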